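/- Let R be a pseudo-valuation domain issued from (V, M, k) with K := V/M, and suppose that for every k-vector subspace W of K containing k, some power W^n is a field. Then for all nonzero ideals J ⊆ I of R, J is a t-reduction of I if and only if J is a reduction of I. -/

import Mathlib

open scoped nonZeroDivisors

/-- The `v`-operation (divisorial closure) on `R`-submodules of the fraction field `K`:
`I_v = (I⁻¹)⁻¹` where `I⁻¹ = (R : I) = 1 / I`. -/
noncomputable def vS (R K : Type*) [CommRing R] [Field K] [Algebra R K]
    (I : Submodule R K) : Submodule R K := 1 / (1 / I)

/-- The `t`-operation: `I_t = ⋃ J_v` where `J` ranges over nonzero finitely generated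
sub-ideals of `I`. -/
noncomputable def tS (R K : Type*) [CommRing R] [Field K] [Algebra R K]
    (I : Submodule R K) : Submodule R K :=
  ⨆ J ∈ {J : Submodule R K | J ≠ ⊥ ∧ J.FG ∧ J ≤ I}, vS R K J

/-- The image of an ideal of `R` in the fraction field `K`, as an `R`-submodule. -/
noncomputable def idealToSub (R K : Type*) [CommRing R] [Field K] [Algebra R K]
    (I : Ideal R) : Submodule R K := Submodule.map (Algebra.linearMap R K) I

/-- The `t`-closure of an ideal of `R`, computed in the fraction field `K`. -/
noncomputable def tI (R K : Type*) [CommRing R] [Field K] [Algebra R K]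
    (I : Ideal R) : Submodule R K := tS R K (idealToSub R K I)

/-- The `v`-closure of an ideal of `R`, computed in the fraction field `K`. -/
noncomputable def vI (R K : Type*) [CommRing R] [Field K] [Algebra R K]
    (I : Ideal R) : Submodule R K := vS R K (idealToSub R K I)

/-!
For every ideal `S` of `R = φ⁻¹(k)` one has `S ⊆ S_t ⊆ V S`: the `V`-ideal `V S` is
divisorial because `V` is a valuation overring of `R` strictly containing it. Hence a
`t`-reduction gives `I ^ (n + 1) ⊆ V J I ^ n` inside `V`. If `I` is an ideal of `V`, multiplying
by `I` already gives `I ^ (n + 2) = J I ^ (n + 1)`. Otherwise `I = c T` with `T = φ⁻¹(W)` and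
`k ⊆ W`; the inclusion forces `J` to contain `c u` with `u` a unit of `V`. Once `W ^ N` is a
field, `φ(u)⁻¹ ∈ W ^ N`, so `u⁻¹ T ^ (N + 1) ⊆ T ^ N` and hence
`I ^ (N + 1) ⊆ (c u) I ^ N ⊆ J I ^ N`.
-/

section Closure

variable {A K : Type*} [CommRing A] [Field K] [Algebra A K]

theorem Submodule.one_div_antitone : Antitone fun S : Submodule A K => 1 / S := fun _ _ h =>
  Submodule.le_div_iff_mul_le.2 <| (mul_le_mul' le_rfl h).trans <| by
    rw [mul_comm]; exact Submodule.mul_one_div_le_one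

theorem vS_mono {S S' : Submodule A K} (h : S ≤ S') : vS A K S ≤ vS A K S' :=
  Submodule.one_div_antitone (Submodule.one_div_antitone h)

theorem le_vS (S : Submodule A K) : S ≤ vS A K S := by
  unfold vS
  rw [Submodule.le_div_iff_mul_le]
  exact Submodule.mul_one_div_le_one

theorem tS_le_vS (S : Submodule A K) : tS A K S ≤ vS A K S :=
  iSup₂_le fun _ hJ => vS_mono hJ.2.2

theorem le_tS (S : Submodule A K) : S ≤ tS A K S := by
  intro x hx
  rcases eq_or_ne x 0 with rfl | hx0
  · exact zero_mem _
  have hx' : Submodule.span A {x} ∈ {J : Submodule A K | J ≠ ⊥ ∧ J.FG ∧ J ≤ S} :=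
    ⟨by simpa [Submodule.span_singleton_eq_bot] using hx0, Submodule.fg_span_singleton x,
      by simpa [Submodule.span_le] using hx⟩
  exact le_iSup₂_of_le (f := fun J _ => vS A K J) _ hx' (le_vS _)
    (Submodule.mem_span_singleton_self x)

end Closure

theorem mul_pow_succ_eq_of_mul_le_self {M : Type*} [CommMonoid M] [PartialOrder M]
    [MulLeftMono M] {t I J : M} (hJI : J ≤ I) (hI : t * I ≤ I) {n : ℕ}
    (h : I ^ (n + 1) ≤ t * (J * I ^ n)) : J * I ^ (n + 1) = I ^ (n + 1 + 1) := by
  refine le_antisymm (by rw [pow_succ' I (n + 1)]; exact mul_le_mul_left hJI _) ?_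
  calc I ^ (n + 1 + 1) = I * I ^ (n + 1) := pow_succ' _ _
    _ ≤ I * (t * (J * I ^ n)) := mul_le_mul_right h _
    _ = t * I * (J * I ^ n) := by rw [mul_left_comm, mul_assoc]
    _ ≤ I * (J * I ^ n) := mul_le_mul_left hI _
    _ = J * I ^ (n + 1) := by rw [pow_succ', mul_left_comm]

theorem Ideal.pow_restrictScalars_le {R A : Type*} [CommSemiring R] [CommSemiring A]
    [Algebra R A] (P : Ideal A) (n : ℕ) :
    P.restrictScalars R ^ n ≤ (P ^ n).restrictScalars R := by
  induction n with
  | zero =>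
    rw [pow_zero, pow_zero, Ideal.one_eq_top, Submodule.restrictScalars_top]
    exact le_top
  | succ n ih =>
    rw [pow_succ, pow_succ, Submodule.restrictScalars_mul]
    exact mul_le_mul_left ih _

section Embedding

variable {V Q : Type*} [CommRing V] [Field Q] {R : Subring V} [Algebra R Q]

theorem Subring.exists_injective_algHom_of_mul_mem [IsDomain V] [IsFractionRing R Q] {m : V}
    (hm0 : m ≠ 0) (hm : ∀ v, m * v ∈ R) : ∃ f : V →ₐ[R] Q, Function.Injective f := by
  let g : V → Q := fun v => algebraMap R Q ⟨m * v, hm v⟩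
  have hg_inj : Function.Injective g := fun v w h =>
    mul_left_cancel₀ hm0 (congrArg Subtype.val (IsFractionRing.injective R Q h))
  have hg_add : ∀ v w, g (v + w) = g v + g w := fun v w => by
    simp only [g, ← map_add]; congr 1; ext; simp [mul_add]
  have hg_mul : ∀ v w, g (v * w) * g 1 = g v * g w := fun v w => by
    simp only [g, ← map_mul]; congr 1; ext; simp only [Subring.coe_mul]; ring
  have hg0 : g 0 = 0 := by simpa using hg_add 0 0
  have hg1 : g 1 ≠ 0 := fun h => one_ne_zero (hg_inj (h.trans hg0.symm))
  refine ⟨{ toFun := fun v => g v / g 1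
            map_one' := div_self hg1
            map_mul' := fun v w => by
              rw [div_mul_div_comm, ← hg_mul, mul_div_mul_right _ _ hg1]
            map_zero' := by rw [hg0, zero_div]
            map_add' := fun v w => by rw [hg_add, add_div]
            commutes' := fun r => by
              rw [div_eq_iff hg1]; simp only [g, ← map_mul]; congr 1; ext
              simp only [Subring.coe_mul]; rw [mul_one, mul_comm]; rfl }, ?_⟩
  intro v w h
  exact hg_inj ((div_left_inj' hg1).1 h)

variable {f : V →ₐ[R] Q} (hf : Function.Injective f)
include hf

theorem AlgHom.mem_one_iff_mem_subring {v : V} : f v ∈ (1 : Submodule R Q) ↔ v ∈ R := by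
  rw [Submodule.mem_one]
  refine ⟨fun ⟨r, hr⟩ => ?_, fun hv => ⟨⟨v, hv⟩, (f.commutes _).symm⟩⟩
  rw [← f.commutes] at hr
  exact hf hr ▸ r.2

theorem exists_eq_or_exists_mul_eq_one [IsDomain V] [ValuationRing V] [IsFractionRing R Q]
    (q : Q) : (∃ v, f v = q) ∨ ∃ w ∈ IsLocalRing.maximalIdeal V, f w * q = 1 := by
  have hfr : ∀ r : R, algebraMap R Q r = f r := fun r => (f.commutes r).symm
  obtain ⟨r, s, hs, rfl⟩ := IsFractionRing.div_surjective (A := R) q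
  rw [hfr, hfr]
  have hs0 : (s : V) ≠ 0 := fun h => nonZeroDivisors.coe_ne_zero ⟨s, hs⟩ (Subtype.ext h)
  have hfs : f s ≠ 0 := (map_ne_zero_iff f hf).2 hs0
  by_cases hsr : (s : V) ∣ r
  · obtain ⟨d, hd⟩ := hsr
    exact .inl ⟨d, by rw [eq_div_iff hfs, hd, map_mul, mul_comm]⟩
  obtain ⟨d, hd⟩ := (ValuationRing.dvd_total (s : V) r).resolve_left hsr
  refine .inr ⟨d, fun hd' => hsr ⟨↑hd'.unit⁻¹, by simp [hd, mul_assoc]⟩, ?_⟩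
  rw [mul_div_assoc', div_eq_one_iff_eq hfs, ← map_mul, mul_comm, ← hd]

end Embedding

open IsLocalRing

section PseudoValuation

variable {V : Type*} [CommRing V] [IsDomain V] [ValuationRing V]

abbrev residuePreimage (k : Subfield (ResidueField V)) : Subring V :=
  k.toSubring.comap (residue V)

variable {k : Subfield (ResidueField V)}

theorem mem_residuePreimage_of_mem_maximalIdeal {v : V} (hv : v ∈ maximalIdeal V) :
    v ∈ residuePreimage k := by
  simp [(residue_eq_zero_iff v).2 hv]

theorem isField_residuePreimage (hV : IsField V) : IsField (residuePreimage k) := by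
  refine ⟨⟨0, 1, zero_ne_one⟩, mul_comm, fun {r} hr => ?_⟩
  obtain ⟨w, hw⟩ := hV.mul_inv_cancel fun h => hr (Subtype.ext h)
  have hres : residue V w = (residue V r)⁻¹ :=
    eq_inv_of_mul_eq_one_right (by rw [← map_mul, hw, map_one])
  exact ⟨⟨w, by simpa [hres] using k.inv_mem r.2⟩, Subtype.ext hw⟩

theorem top_mul_le_or_exists_le_span_singleton (S : Submodule (residuePreimage k) V) :
    ⊤ * S ≤ S ∨
      ∃ c ∈ S, c ≠ 0 ∧ S ≤ (Ideal.span {c}).restrictScalars (residuePreimage k) := by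
  by_cases h : ∃ c ∈ S, c ≠ 0 ∧ S ≤ (Ideal.span {c}).restrictScalars (residuePreimage k)
  · exact .inr h
  push Not at h
  refine .inl (Submodule.mul_le.2 fun v _ x hx => ?_)
  rcases eq_or_ne x 0 with rfl | hx0
  · simp
  obtain ⟨y, hy, hxy⟩ := SetLike.not_le_iff_exists.1 (h x hx hx0)
  rw [Submodule.restrictScalars_mem, Ideal.mem_span_singleton] at hxy
  obtain ⟨d, rfl⟩ := (ValuationRing.dvd_total x y).resolve_left hxy
  have hd : d ∈ maximalIdeal V := fun hd => hxy ⟨↑hd.unit⁻¹, by simp [mul_assoc]⟩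
  have hdv : d * v ∈ residuePreimage k :=
    mem_residuePreimage_of_mem_maximalIdeal (Ideal.mul_mem_right v _ hd)
  have : v * (y * d) = (⟨d * v, hdv⟩ : residuePreimage k) • y := by
    rw [Subring.smul_def, smul_eq_mul]; ring
  rw [this]
  exact S.smul_mem _ hy

theorem exists_unit_mul_mem {I J : Submodule (residuePreimage k) V} {c : V} (hc0 : c ≠ 0)
    (hIc : I ≤ (Ideal.span {c}).restrictScalars (residuePreimage k)) (hJI : J ≤ I) {n : ℕ}
    (h : c ^ (n + 1) ∈ ⊤ * (J * I ^ n)) : ∃ u : Vˣ, c * u ∈ J := by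
  by_contra! hJ
  have hJm : J ≤ (Ideal.span {c} * maximalIdeal V).restrictScalars (residuePreimage k) :=
    fun j hj => by
      obtain ⟨a, rfl⟩ := Ideal.mem_span_singleton'.1 (hIc (hJI hj))
      refine Ideal.mem_span_singleton_mul.2 ⟨a, fun ha => hJ ha.unit ?_, mul_comm _ _⟩
      simpa [mul_comm] using hj
  have hIn : I ^ n ≤ (Ideal.span {c} ^ n).restrictScalars (residuePreimage k) :=
    (pow_le_pow_left' hIc n).trans (Ideal.pow_restrictScalars_le _ n)
  have hle : ⊤ * (J * I ^ n) ≤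
      (Ideal.span {c ^ (n + 1)} * maximalIdeal V).restrictScalars (residuePreimage k) :=
    calc ⊤ * (J * I ^ n)
        ≤ (⊤ * (Ideal.span {c} * maximalIdeal V * Ideal.span {c} ^ n)).restrictScalars
            (residuePreimage k) := by
          rw [Submodule.restrictScalars_mul, Submodule.restrictScalars_mul,
            Submodule.restrictScalars_top]
          exact mul_le_mul_right (mul_le_mul' hJm hIn) _
      _ = _ := by
          rw [Ideal.top_mul, mul_right_comm, Ideal.span_singleton_pow,
            Ideal.span_singleton_mul_span_singleton, ← pow_succ']
  obtain ⟨z, hz, hcz⟩ := Ideal.mem_span_singleton_mul.1 (hle h)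
  rw [mul_eq_left₀ (pow_ne_zero _ hc0)] at hcz
  exact (maximalIdeal.isMaximal V).ne_top ((Ideal.eq_top_iff_one _).2 (hcz ▸ hz))

def residueImage (T : Submodule (residuePreimage k) V) : Submodule k (ResidueField V) where
  carrier := residue V '' T
  add_mem' := by
    rintro _ _ ⟨a, ha, rfl⟩ ⟨b, hb, rfl⟩
    exact ⟨a + b, add_mem ha hb, map_add _ a b⟩
  zero_mem' := ⟨0, zero_mem T, map_zero _⟩
  smul_mem' := by
    rintro c _ ⟨a, ha, rfl⟩
    obtain ⟨r, hr⟩ := residue_surjective (c : ResidueField V)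
    exact ⟨r * a, T.smul_mem ⟨r, by simp [hr]⟩ ha, by simp [hr, Subfield.smul_def]⟩

theorem mem_residueImage {T : Submodule (residuePreimage k) V} {α : ResidueField V} :
    α ∈ residueImage T ↔ ∃ t ∈ T, residue V t = α :=
  Iff.rfl

theorem residueImage_one : residueImage (1 : Submodule (residuePreimage k) V) = 1 := by
  ext α
  simp only [mem_residueImage, Submodule.mem_one]
  constructor
  · rintro ⟨_, ⟨r, rfl⟩, rfl⟩
    exact ⟨⟨residue V r, r.2⟩, rfl⟩
  · rintro ⟨c, rfl⟩
    obtain ⟨r, hr⟩ := residue_surjective (c : ResidueField V)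
    exact ⟨r, ⟨⟨r, by simp [hr]⟩, rfl⟩, hr⟩

theorem residueImage_mul (S T : Submodule (residuePreimage k) V) :
    residueImage (S * T) = residueImage S * residueImage T := by
  refine le_antisymm ?_ (Submodule.mul_le.2 ?_)
  · rintro _ ⟨x, hx, rfl⟩
    induction hx using Submodule.mul_induction_on' with
    | mem_mul_mem s hs t ht =>
      rw [map_mul]
      exact Submodule.mul_mem_mul ⟨s, hs, rfl⟩ ⟨t, ht, rfl⟩
    | add x _ y _ hx hy => rw [map_add]; exact add_mem hx hy
  · rintro _ ⟨s, hs, rfl⟩ _ ⟨t, ht, rfl⟩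
    exact ⟨s * t, Submodule.mul_mem_mul hs ht, map_mul _ s t⟩

theorem residueImage_pow (T : Submodule (residuePreimage k) V) (n : ℕ) :
    residueImage (T ^ n) = residueImage T ^ n := by
  induction n with
  | zero => rw [pow_zero, pow_zero, residueImage_one]
  | succ n ih => rw [pow_succ, residueImage_mul, ih, pow_succ]

theorem mem_of_residue_mem_residueImage {T : Submodule (residuePreimage k) V} (h1 : (1 : V) ∈ T)
    {v : V} (hv : residue V v ∈ residueImage T) : v ∈ T := by
  obtain ⟨t, ht, htv⟩ := hv
  have hvt : v - t ∈ maximalIdeal V := by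
    rw [← residue_eq_zero_iff, map_sub, htv, sub_self]
  have hvtR : v - t ∈ residuePreimage k := mem_residuePreimage_of_mem_maximalIdeal hvt
  have : v = t + (⟨v - t, hvtR⟩ : residuePreimage k) • 1 := by
    rw [Subring.smul_def, smul_eq_mul, mul_one, add_sub_cancel]
  rw [this]
  exact add_mem ht (T.smul_mem _ h1)

theorem inv_mul_mem_pow_of_residueImage_pow_eq {T : Submodule (residuePreimage k) V}
    (h1 : (1 : V) ∈ T) {N : ℕ} (hN : 0 < N) {F : Subfield (ResidueField V)}
    (hF : (↑(residueImage T ^ N) : Set (ResidueField V)) = F) {u : Vˣ} (hu : (u : V) ∈ T)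
    {x : V} (hx : x ∈ T ^ (N + 1)) : ↑u⁻¹ * x ∈ T ^ N := by
  set W := residueImage T
  have hWF : ∀ α, α ∈ W ^ N ↔ α ∈ F := fun α => by
    rw [← SetLike.mem_coe, hF, SetLike.mem_coe]
  have hW : W ≤ W ^ N := le_self_pow (Submodule.one_le.2 ⟨1, h1, map_one _⟩) hN.ne'
  have hWN : W ^ (N + 1) ≤ W ^ N := by
    rw [pow_succ]
    exact Submodule.mul_le.2 fun a ha b hb =>
      (hWF _).2 (F.mul_mem ((hWF a).1 ha) ((hWF b).1 (hW hb)))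
  refine mem_of_residue_mem_residueImage (by simpa using Submodule.pow_mem_pow T h1 N) ?_
  rw [residueImage_pow, hWF, map_mul, map_units_inv]
  refine F.mul_mem (F.inv_mem ((hWF _).1 (hW ⟨u, hu, rfl⟩))) ((hWF _).1 (hWN ?_))
  rw [← residueImage_pow]
  exact ⟨x, hx, rfl⟩

section Field

variable (hfield : ∀ W : Submodule k (ResidueField V), (k : Set (ResidueField V)) ⊆ W →
  ∃ n : ℕ, 0 < n ∧ ∃ F : Subfield (ResidueField V), (↑(W ^ n) : Set (ResidueField V)) = F)
include hfield

theorem exists_mul_pow_eq_of_le_span_singleton {J I : Submodule (residuePreimage k) V}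
    (hJI : J ≤ I) {c : V} (hcI : c ∈ I) (hc0 : c ≠ 0)
    (hIc : I ≤ (Ideal.span {c}).restrictScalars (residuePreimage k)) {n : ℕ}
    (h : I ^ (n + 1) ≤ ⊤ * (J * I ^ n)) : ∃ m, J * I ^ m = I ^ (m + 1) := by
  set T := I.comap (LinearMap.mulLeft (residuePreimage k) c)
  have hI : Submodule.span (residuePreimage k) {c} * T = I := by
    ext x
    rw [Submodule.mem_span_singleton_mul]
    refine ⟨fun ⟨_, hz, hx⟩ => hx ▸ hz, fun hx => ?_⟩
    obtain ⟨a, rfl⟩ := Ideal.mem_span_singleton'.1 (hIc hx)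
    exact ⟨a, by simpa [T, mul_comm] using hx, mul_comm _ _⟩
  have h1T : (1 : V) ∈ T := by simpa [T] using hcI
  obtain ⟨u, hu⟩ := exists_unit_mul_mem hc0 hIc hJI (h (Submodule.pow_mem_pow _ hcI _))
  have huT : (u : V) ∈ T := hJI hu
  have hkT : (k : Set (ResidueField V)) ⊆ residueImage T := by
    intro α hα
    obtain ⟨r, hr⟩ := residue_surjective α
    have hrT := T.smul_mem (⟨r, by simpa [hr] using hα⟩ : residuePreimage k) h1T
    rw [Subring.smul_def, smul_eq_mul, mul_one] at hrT
    exact ⟨r, hrT, hr⟩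
  obtain ⟨N, hN, F, hF⟩ := hfield (residueImage T) hkT
  refine ⟨N, le_antisymm ((mul_le_mul_left hJI _).trans_eq (pow_succ' I N).symm) ?_⟩
  rw [← hI, mul_pow, mul_pow, Submodule.span_pow, Submodule.span_pow, Set.singleton_pow,
    Set.singleton_pow]
  intro x hx
  obtain ⟨t, ht, rfl⟩ := Submodule.mem_span_singleton_mul.1 hx
  have : c ^ (N + 1) * t = c * u * (c ^ N * (↑u⁻¹ * t)) := by
    linear_combination (-(c ^ (N + 1) * t)) * u.mul_inv
  rw [this]
  exact Submodule.mul_mem_mul hu (Submodule.mem_span_singleton_mul.2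
    ⟨_, inv_mul_mem_pow_of_residueImage_pow_eq h1T hN hF huT ht, rfl⟩)

theorem exists_mul_pow_eq_pow_succ_of_le_top_mul {J I : Submodule (residuePreimage k) V}
    (hJI : J ≤ I) {n : ℕ} (h : I ^ (n + 1) ≤ ⊤ * (J * I ^ n)) :
    ∃ m, J * I ^ m = I ^ (m + 1) := by
  rcases top_mul_le_or_exists_le_span_singleton I with hI | ⟨c, hcI, hc0, hIc⟩
  · exact ⟨n + 1, mul_pow_succ_eq_of_mul_le_self hJI hI h⟩
  · exact exists_mul_pow_eq_of_le_span_singleton hfield hJI hcI hc0 hIc h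

end Field

variable {Q : Type*} [Field Q] [Algebra (residuePreimage k) Q]
  [IsFractionRing (residuePreimage k) Q] {f : V →ₐ[residuePreimage k] Q}
  (hf : Function.Injective f)
include hf

/-- If `z ∉ X`, the valuation property puts `X` inside `z f(M)`; then `z⁻¹ f(v₀) ∈ X⁻¹`,
which is incompatible with `z ∈ X_v` since `f(v₀) ∉ R`. -/
theorem vS_map_le_of_top_mul_le {v₀ : V} (hv₀ : v₀ ∉ residuePreimage k)
    {X : Submodule (residuePreimage k) V} (hX : (⊤ : Submodule (residuePreimage k) V) * X ≤ X) :
    vS (residuePreimage k) Q (X.map f.toLinearMap) ≤ X.map f.toLinearMap := by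
  unfold vS
  intro z hz
  by_contra hzX
  have hz0 : z ≠ 0 := fun h => hzX (h ▸ zero_mem _)
  have hX_sub : ∀ y ∈ X.map f.toLinearMap, ∃ w ∈ maximalIdeal V, y = z * f w := by
    rintro _ ⟨x, hx, rfl⟩
    rcases eq_or_ne x 0 with rfl | hx0
    · exact ⟨0, zero_mem _, by simp⟩
    have hfx : f x ≠ 0 := (map_ne_zero_iff f hf).2 hx0
    rcases exists_eq_or_exists_mul_eq_one hf (z / f x) with ⟨v, hv⟩ | ⟨w, hw, hwz⟩
    · exact absurd ⟨v * x, hX (Submodule.mul_mem_mul trivial hx), by simp [hv, hfx]⟩ hzX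
    · rw [mul_div_assoc', div_eq_one_iff_eq hfx] at hwz
      exact ⟨w, hw, by rw [AlgHom.toLinearMap_apply, ← hwz, mul_comm]⟩
  have hinv : z⁻¹ * f v₀ ∈ 1 / X.map f.toLinearMap := by
    refine Submodule.mem_div_iff_forall_mul_mem.2 fun y hy => ?_
    obtain ⟨w, hw, rfl⟩ := hX_sub y hy
    rw [show z⁻¹ * f v₀ * (z * f w) = f (v₀ * w) by rw [map_mul]; field_simp]
    exact (AlgHom.mem_one_iff_mem_subring hf).2
      (mem_residuePreimage_of_mem_maximalIdeal (Ideal.mul_mem_left _ _ hw))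
  have := Submodule.mem_div_iff_forall_mul_mem.1 hz _ hinv
  rw [mul_inv_cancel_left₀ hz0] at this
  exact hv₀ ((AlgHom.mem_one_iff_mem_subring hf).1 this)

theorem map_le_top_mul_of_tI_le (hk : k ≠ ⊤) {A B : Ideal (residuePreimage k)}
    (h : tI (residuePreimage k) Q A ≤ tI (residuePreimage k) Q B) :
    Submodule.map (Algebra.ofId (residuePreimage k) V).toLinearMap A ≤
      ⊤ * Submodule.map (Algebra.ofId (residuePreimage k) V).toLinearMap B := by
  set ι := (Algebra.ofId (residuePreimage k) V).toLinearMap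
  obtain ⟨α, -, hα⟩ := SetLike.exists_of_lt (lt_top_iff_ne_top.2 hk)
  obtain ⟨v₀, rfl⟩ := residue_surjective α
  have hmap : ∀ C : Ideal (residuePreimage k),
      (Submodule.map ι C).map f.toLinearMap = idealToSub (residuePreimage k) Q C := by
    intro C
    rw [idealToSub, ← Submodule.map_comp]
    congr 1
    exact LinearMap.ext fun r => f.commutes r
  rw [← Submodule.map_le_map_iff_of_injective (f := f.toLinearMap) hf]
  calc (Submodule.map ι A).map f.toLinearMap
      = idealToSub (residuePreimage k) Q A := hmap A
    _ ≤ tI (residuePreimage k) Q A := le_tS _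
    _ ≤ tI (residuePreimage k) Q B := h
    _ ≤ vS (residuePreimage k) Q (idealToSub (residuePreimage k) Q B) := tS_le_vS _
    _ ≤ vS (residuePreimage k) Q ((⊤ * Submodule.map ι B).map f.toLinearMap) := by
      rw [← hmap]
      exact vS_mono (Submodule.map_mono (le_mul_of_one_le_left' (Submodule.one_le.2 trivial)))
    _ ≤ _ := vS_map_le_of_top_mul_le hf (v₀ := v₀) hα
      (by rw [← mul_assoc]; exact mul_le_mul_left le_top _)

end PseudoValuation

theorem pvd_t_reduction_iff_reduction_general (V : Type*) [CommRing V] [IsDomain V] [ValuationRing V]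
    (k : Subfield (IsLocalRing.ResidueField V)) (hk : k ≠ ⊤)
    (R : Subring V) (hR : R = Subring.comap (IsLocalRing.residue V) k.toSubring)
    (Q : Type*) [Field Q] [Algebra ↥R Q] [IsFractionRing ↥R Q]
    (hfield : ∀ W : Submodule ↥k (IsLocalRing.ResidueField V),
      (↑k : Set (IsLocalRing.ResidueField V)) ⊆ (↑W : Set (IsLocalRing.ResidueField V)) →
        ∃ n : ℕ, 0 < n ∧ ∃ F : Subfield (IsLocalRing.ResidueField V),
          (↑(W ^ n) : Set (IsLocalRing.ResidueField V)) = (↑F : Set (IsLocalRing.ResidueField V)))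
    (J I : Ideal ↥R) (hJ0 : J ≠ 0) (hJI : J ≤ I) :
    (∃ n : ℕ, tI ↥R Q (J * I ^ n) = tI ↥R Q (I ^ (n + 1)))
      ↔ (∃ n : ℕ, J * I ^ n = I ^ (n + 1)) := by
  subst hR
  refine ⟨fun ⟨n, hn⟩ => ?_, fun ⟨n, h⟩ => ⟨n, by rw [h]⟩⟩
  by_cases hV : IsField V
  · obtain ⟨x, hxJ, hx0⟩ := Submodule.exists_mem_ne_zero_of_ne_bot hJ0
    obtain ⟨y, hxy⟩ := (isField_residuePreimage hV).mul_inv_cancel hx0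
    have hJ : J = ⊤ := Ideal.eq_top_of_isUnit_mem J hxJ (IsUnit.of_mul_eq_one y hxy)
    rw [hJ, top_le_iff] at hJI
    exact ⟨0, by rw [hJ, hJI]; simp⟩
  obtain ⟨m, hm, hm0⟩ := Submodule.exists_mem_ne_zero_of_ne_bot
    (mt IsLocalRing.isField_iff_maximalIdeal_eq.2 hV)
  obtain ⟨f, hf⟩ := Subring.exists_injective_algHom_of_mul_mem (R := residuePreimage k) (Q := Q)
    hm0 fun v => mem_residuePreimage_of_mem_maximalIdeal (Ideal.mul_mem_right v _ hm)
  have hle := map_le_top_mul_of_tI_le hf hk hn.ge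
  rw [Submodule.map_mul, Submodule.map_pow, Submodule.map_pow] at hle
  obtain ⟨m, hm⟩ := exists_mul_pow_eq_pow_succ_of_le_top_mul hfield (Submodule.map_mono hJI) hle
  refine ⟨m, Submodule.map_injective_of_injective (f := (Algebra.ofId _ V).toLinearMap)
    Subtype.val_injective ?_⟩
  rw [Submodule.map_mul, Submodule.map_pow, Submodule.map_pow, hm]

/-- Let `R` be a pseudo-valuation domain issued from `(V, M, k)` with `K := V/M`, and
suppose every `k`-subspace `W` of `K` containing `k` has some power `W^n` which is a field.
Then for all nonzero ideals `J ⊆ I` of `R`, `J` is a `t`-reduction of `I` iff `J` is a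
reduction of `I`. -/
theorem pvd_t_reduction_iff_reduction (V : Type*) [CommRing V] [IsDomain V] [ValuationRing V]
    (k : Subfield (IsLocalRing.ResidueField V)) (hk : k ≠ ⊤)
    (R : Subring V) (hR : R = Subring.comap (IsLocalRing.residue V) k.toSubring)
    (Q : Type*) [Field Q] [Algebra ↥R Q] [IsFractionRing ↥R Q]
    (hfield : ∀ W : Submodule ↥k (IsLocalRing.ResidueField V),
      (↑k : Set (IsLocalRing.ResidueField V)) ⊆ (↑W : Set (IsLocalRing.ResidueField V)) →
        ∃ n : ℕ, 0 < n ∧ ∃ F : Subfield (IsLocalRing.ResidueField V),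
          (↑(W ^ n) : Set (IsLocalRing.ResidueField V)) = (↑F : Set (IsLocalRing.ResidueField V)))
    (J I : Ideal ↥R) (hJ0 : J ≠ 0) (hI0 : I ≠ 0) (hJI : J ≤ I) :
    (∃ n : ℕ, tI ↥R Q (J * I ^ n) = tI ↥R Q (I ^ (n + 1)))
      ↔ (∃ n : ℕ, J * I ^ n = I ^ (n + 1)) :=
  pvd_t_reduction_iff_reduction_general V k hk R hR Q hfield J I hJ0 hJI
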